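/- arXiv:1704.07871 — 2 statements merged into one kernel-verified Lean document; each statement's English description precedes it below -/
import Mathlib

section
/- Let I ⊂ ℝ be a bounded closed nondegenerate interval with midpoint ξ = ½(min I + max I), and let f : I → ℝ be measurable. Suppose there exist a, b, c ∈ ℝ such that |f(x) − (a x + b)| ≤ c|x − ξ| for all x ∈ I. Then f ∈ L^∞(I), and for every r > 1 the unique minimizer τ_r^f of t ↦ ‖f − t‖_r satisfies |τ_r^f − f(ξ)| ≤ ½ c λ(I). -/
/-!
Write `ξ` for the midpoint and `M = f ξ + c λ(I) / 2`. The cone condition gives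
`f x + f (2ξ - x) ≤ 2 M` on `I`, because the affine parts add up to `2 f ξ`. For real numbers
`u, v` the map `t ↦ |u - t| ^ r + |v - t| ^ r` is strictly convex and symmetric about `(u + v) / 2`,
hence strictly increasing to the right of it. Averaging over the pairs `x, 2ξ - x`, which the
reflection of `I` permutes in a measure-preserving way, every `t > M` is beaten by `M`, so
`τ ≤ M`. Applied to `-f`, the same argument gives `f ξ - c λ(I) / 2 ≤ τ`.
-/

open Set MeasureTheory

lemma strictConvexOn_abs_rpow {r : ℝ} (hr : 1 < r) :
    StrictConvexOn ℝ univ fun x : ℝ => |x| ^ r := by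
  refine ⟨convex_univ, ?_⟩
  rintro x - y - hxy p q hp hq hpq
  simp only [smul_eq_mul]
  by_cases habs : |x| = |y|
  · obtain rfl : x = -y := (abs_eq_abs.1 habs).resolve_left hxy
    have hy : 0 < |y| := abs_pos.2 fun h => hxy (by simp [h])
    have hshrink : |p * -y + q * y| < |y| := by
      rw [show p * -y + q * y = (q - p) * y by ring, abs_mul]
      have : |q - p| < 1 := abs_lt.2 ⟨by linarith, by linarith⟩
      nlinarith
    calc |p * -y + q * y| ^ r < |y| ^ r := Real.rpow_lt_rpow (abs_nonneg _) hshrink (by linarith)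
      _ = p * |-y| ^ r + q * |y| ^ r := by rw [abs_neg, ← add_mul, hpq, one_mul]
  · have htri : |p * x + q * y| ≤ p * |x| + q * |y| := by
      calc |p * x + q * y| ≤ |p * x| + |q * y| := abs_add_le _ _
        _ = p * |x| + q * |y| := by rw [abs_mul, abs_mul, abs_of_pos hp, abs_of_pos hq]
    calc |p * x + q * y| ^ r ≤ (p * |x| + q * |y|) ^ r :=
          Real.rpow_le_rpow (abs_nonneg _) htri (by linarith)
      _ < p * |x| ^ r + q * |y| ^ r :=
          (strictConvexOn_rpow hr).2 (abs_nonneg x) (abs_nonneg y) habs hp hq hpq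

lemma abs_sub_rpow_add_abs_sub_rpow_lt {r : ℝ} (hr : 1 < r) {u v t t' : ℝ}
    (ht : u + v ≤ 2 * t) (htt' : t < t') :
    |u - t| ^ r + |v - t| ^ r < |u - t'| ^ r + |v - t'| ^ r := by
  -- `t` is the convex combination `θ (u + v - t') + (1 - θ) t'` of `t'` and its mirror image.
  have hd : 0 < 2 * t' - u - v := by linarith
  obtain ⟨θ, hθ0, hθ1, hθd⟩ : ∃ θ : ℝ, 0 < θ ∧ 0 < 1 - θ ∧ θ * (2 * t' - u - v) = t' - t :=
    ⟨(t' - t) / (2 * t' - u - v), div_pos (by linarith) hd,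
      by rw [one_sub_div hd.ne']; exact div_pos (by linarith) hd, div_mul_cancel₀ _ hd.ne'⟩
  have hcomb : ∀ w w' : ℝ, w + w' = u + v →
      θ * (t' - w') + (1 - θ) * (w - t') = w - t := by
    intro w w' hw
    linear_combination hθd - θ * hw
  have hconv : ∀ w w' : ℝ, w + w' = u + v →
      |w - t| ^ r < θ * |w' - t'| ^ r + (1 - θ) * |w - t'| ^ r := by
    intro w w' hw
    have hne : t' - w' ≠ w - t' := fun h => by linarith
    have := (strictConvexOn_abs_rpow hr).2 (mem_univ _) (mem_univ _) hne hθ0 hθ1 (by ring)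
    simpa only [smul_eq_mul, hcomb w w' hw, abs_sub_comm t' w'] using this
  linarith [hconv u v rfl, hconv v u (add_comm v u)]

section MeasurePreserving

variable {X : Type*} [MeasurableSpace X] {μ : Measure X} {σ : X → X}

lemma integral_lt_integral_of_add_comp_lt (hμ : μ ≠ 0) (hσ : MeasurePreserving σ μ μ)
    {F G : X → ℝ} (hF : Integrable F μ) (hG : Integrable G μ)
    (hlt : ∀ᵐ x ∂μ, F x + F (σ x) < G x + G (σ x)) :
    ∫ x, F x ∂μ < ∫ x, G x ∂μ := by
  have hcomp : ∀ H : X → ℝ, Integrable H μ → Integrable (fun x => H (σ x)) μ :=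
    fun H hH => hσ.integrable_comp_of_integrable hH
  have hsym : ∀ H : X → ℝ, Integrable H μ → Integrable (fun x => H x + H (σ x)) μ :=
    fun H hH => hH.add (hcomp H hH)
  have hsym_int : ∀ H : X → ℝ, Integrable H μ →
      ∫ x, (H x + H (σ x)) ∂μ = 2 * ∫ x, H x ∂μ := fun H hH => by
    rw [integral_add hH (hcomp H hH), two_mul,
      ← integral_map hσ.aemeasurable (by rw [hσ.map_eq]; exact hH.aestronglyMeasurable),
      hσ.map_eq]
  have hD := (hsym G hG).sub (hsym F hF)
  have hDpos : ∀ᵐ x ∂μ, 0 < (G x + G (σ x)) - (F x + F (σ x)) := hlt.mono fun x hx => sub_pos.2 hx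
  have hDint_pos : 0 < ∫ x, ((G x + G (σ x)) - (F x + F (σ x))) ∂μ := by
    refine (integral_nonneg_of_ae (hDpos.mono fun x hx => hx.le)).lt_of_ne fun h0 => hμ ?_
    have hD0 := (integral_eq_zero_iff_of_nonneg_ae (hDpos.mono fun x hx => hx.le) hD).1 h0.symm
    refine ae_eq_bot.1 (Filter.eventually_false_iff_eq_bot.1 ?_)
    filter_upwards [hDpos, hD0] with x hx hx0
    exact hx.ne' hx0
  rw [integral_sub (hsym G hG) (hsym F hF), hsym_int G hG, hsym_int F hF] at hDint_pos
  linarith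

lemma eLpNorm_sub_const_lt_of_add_comp_le [IsFiniteMeasure μ] (hμ : μ ≠ 0)
    (hσ : MeasurePreserving σ μ μ) {r : ℝ} (hr : 1 < r) {g : X → ℝ}
    (hg : MemLp g (ENNReal.ofReal r) μ) {m t : ℝ} (hm : ∀ᵐ x ∂μ, g x + g (σ x) ≤ 2 * m)
    (hmt : m < t) :
    eLpNorm (fun x => g x - m) (ENNReal.ofReal r) μ
      < eLpNorm (fun x => g x - t) (ENNReal.ofReal r) μ := by
  have hp0 : ENNReal.ofReal r ≠ 0 := (ENNReal.ofReal_pos.2 (by linarith)).ne'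
  have hpr : (ENNReal.ofReal r).toReal = r := ENNReal.toReal_ofReal (by linarith)
  have hmem : ∀ s : ℝ, MemLp (fun x => g x - s) (ENNReal.ofReal r) μ :=
    fun s => hg.sub (memLp_const s)
  have hint : ∀ s : ℝ, Integrable (fun x => |g x - s| ^ r) μ := fun s => by
    simpa only [hpr, Real.norm_eq_abs] using (hmem s).integrable_norm_rpow hp0 ENNReal.ofReal_ne_top
  have hlt : ∫ x, |g x - m| ^ r ∂μ < ∫ x, |g x - t| ^ r ∂μ :=
    integral_lt_integral_of_add_comp_lt hμ hσ (hint m) (hint t) <| hm.mono fun x hx =>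
      abs_sub_rpow_add_abs_sub_rpow_lt hr hx hmt
  simp only [(hmem _).eLpNorm_eq_integral_rpow_norm hp0 ENNReal.ofReal_ne_top, hpr,
    Real.norm_eq_abs]
  have h0 : 0 ≤ ∫ x, |g x - m| ^ r ∂μ := integral_nonneg fun x => by positivity
  exact (ENNReal.ofReal_lt_ofReal_iff (Real.rpow_pos_of_pos (h0.trans_lt hlt) _)).2 <|
    Real.rpow_lt_rpow (by positivity) hlt (by positivity)

end MeasurePreserving

lemma measurePreserving_reflect_Icc (α β : ℝ) :
    MeasurePreserving (fun x : ℝ => α + β - x)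
      (volume.restrict (Icc α β)) (volume.restrict (Icc α β)) := by
  have hpre : (fun x : ℝ => α + β - x) ⁻¹' Icc α β = Icc α β := by
    ext x
    simp only [mem_preimage, mem_Icc]
    constructor <;> rintro ⟨h1, h2⟩ <;> constructor <;> linarith
  have := (Measure.measurePreserving_sub_left volume (α + β)).restrict_preimage
    (s := Icc α β) measurableSet_Icc
  rwa [hpre] at this

lemma abs_sub_midpoint_le {α β x : ℝ} (hx : x ∈ Icc α β) : |x - (α + β) / 2| ≤ (β - α) / 2 :=
  abs_le.2 ⟨by linarith [hx.1], by linarith [hx.2]⟩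

section Cone

variable {α β a b c : ℝ} {f : ℝ → ℝ}

lemma memLp_top_of_cone (hmeas : Measurable f)
    (hcone : ∀ x ∈ Icc α β, |f x - (a * x + b)| ≤ c * |x - (α + β) / 2|) :
    MemLp f ⊤ (volume.restrict (Icc α β)) := by
  refine memLp_top_of_bound hmeas.aestronglyMeasurable
    (|a| * max |α| |β| + |b| + |c| * ((β - α) / 2)) ?_
  filter_upwards [ae_restrict_mem measurableSet_Icc] with x hx
  have haffine : |a * x + b| ≤ |a| * max |α| |β| + |b| := by
    calc |a * x + b| ≤ |a| * |x| + |b| := by rw [← abs_mul]; exact abs_add_le _ _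
      _ ≤ |a| * max |α| |β| + |b| := by gcongr; exact abs_le_max_abs_abs hx.1 hx.2
  have hdev : c * |x - (α + β) / 2| ≤ |c| * ((β - α) / 2) :=
    (le_abs_self _).trans (by rw [abs_mul, abs_abs]; gcongr; exact abs_sub_midpoint_le hx)
  calc ‖f x‖ = |(f x - (a * x + b)) + (a * x + b)| := by rw [Real.norm_eq_abs, sub_add_cancel]
    _ ≤ |f x - (a * x + b)| + |a * x + b| := abs_add_le _ _
    _ ≤ _ := by linarith [hcone x hx]

lemma add_reflect_le_of_cone (hαβ : α < β)
    (hcone : ∀ x ∈ Icc α β, |f x - (a * x + b)| ≤ c * |x - (α + β) / 2|)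
    {x : ℝ} (hx : x ∈ Icc α β) :
    f x + f (α + β - x) ≤ 2 * (f ((α + β) / 2) + c * (β - α) / 2) := by
  have hx' : α + β - x ∈ Icc α β := ⟨by linarith [hx.2], by linarith [hx.1]⟩
  have hapex : f ((α + β) / 2) = a * ((α + β) / 2) + b := by
    have := hcone ((α + β) / 2) ⟨by linarith, by linarith⟩
    rw [sub_self, abs_zero, mul_zero, abs_nonpos_iff, sub_eq_zero] at this
    exact this
  have hc : 0 ≤ c := by
    have := (abs_nonneg _).trans (hcone β ⟨hαβ.le, le_rfl⟩)
    rw [abs_of_pos (by linarith : 0 < β - (α + β) / 2)] at this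
    exact nonneg_of_mul_nonneg_left this (by linarith)
  have hdev : c * |x - (α + β) / 2| ≤ c * ((β - α) / 2) :=
    mul_le_mul_of_nonneg_left (abs_sub_midpoint_le hx) hc
  have h1 := (abs_le.1 (hcone x hx)).2
  have h2 := (abs_le.1 (hcone _ hx')).2
  rw [show α + β - x - (α + β) / 2 = -(x - (α + β) / 2) by ring, abs_neg] at h2
  linarith

lemma sub_midpoint_le_of_cone_of_forall_eLpNorm_le (hαβ : α < β) (hmeas : Measurable f)
    (hcone : ∀ x ∈ Icc α β, |f x - (a * x + b)| ≤ c * |x - (α + β) / 2|)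
    {r : ℝ} (hr : 1 < r) {τ : ℝ}
    (hτ : ∀ t : ℝ, eLpNorm (fun x => f x - τ) (ENNReal.ofReal r) (volume.restrict (Icc α β))
      ≤ eLpNorm (fun x => f x - t) (ENNReal.ofReal r) (volume.restrict (Icc α β))) :
    τ - f ((α + β) / 2) ≤ c * (β - α) / 2 := by
  by_contra! hlt
  have hμ : volume.restrict (Icc α β) ≠ 0 := by
    rw [Ne, Measure.restrict_eq_zero, Real.volume_Icc, ENNReal.ofReal_eq_zero, not_le]
    linarith
  have hpair : ∀ᵐ x ∂volume.restrict (Icc α β),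
      f x + f (α + β - x) ≤ 2 * (f ((α + β) / 2) + c * (β - α) / 2) := by
    filter_upwards [ae_restrict_mem measurableSet_Icc] with x hx
    exact add_reflect_le_of_cone hαβ hcone hx
  have hmem := (memLp_top_of_cone hmeas hcone).mono_exponent (le_top (a := ENNReal.ofReal r))
  exact (hτ _).not_gt <| eLpNorm_sub_const_lt_of_add_comp_le hμ
    (measurePreserving_reflect_Icc α β) hr hmem hpair (by linarith)

end Cone

theorem stmt14 (α β : ℝ) (hαβ : α < β) (f : ℝ → ℝ) (hmeas : Measurable f)
    (a b c : ℝ)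
    (hcone : ∀ x ∈ Set.Icc α β, |f x - (a * x + b)| ≤ c * |x - (α + β) / 2|) :
    MemLp f ⊤ (volume.restrict (Set.Icc α β)) ∧
      ∀ r : ℝ, 1 < r → ∀ τ : ℝ,
        (∀ t : ℝ,
          eLpNorm (fun x => f x - τ) (ENNReal.ofReal r) (volume.restrict (Set.Icc α β))
            ≤ eLpNorm (fun x => f x - t) (ENNReal.ofReal r)
                (volume.restrict (Set.Icc α β))) →
        |τ - f ((α + β) / 2)| ≤ c * (β - α) / 2 := by
  refine ⟨memLp_top_of_cone hmeas hcone, fun r hr τ hτ => abs_le.2 ⟨?_, ?_⟩⟩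
  · have hcone_neg : ∀ x ∈ Set.Icc α β,
        |-f x - (-a * x + -b)| ≤ c * |x - (α + β) / 2| := fun x hx => by
      rw [show -f x - (-a * x + -b) = -(f x - (a * x + b)) by ring, abs_neg]
      exact hcone x hx
    have hnorm_neg : ∀ t : ℝ, eLpNorm (fun x => -f x - -t) (ENNReal.ofReal r)
        (volume.restrict (Set.Icc α β)) = eLpNorm (fun x => f x - t) (ENNReal.ofReal r)
          (volume.restrict (Set.Icc α β)) := fun t => by
      rw [← eLpNorm_neg]; congr 1; ext x; rw [Pi.neg_apply]; ring
    have := sub_midpoint_le_of_cone_of_forall_eLpNorm_le (f := fun x => -f x) hαβ hmeas.neg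
      hcone_neg hr (τ := -τ) fun t => by rw [hnorm_neg, ← neg_neg t, hnorm_neg]; exact hτ (-t)
    linarith
  · exact sub_midpoint_le_of_cone_of_forall_eLpNorm_le hαβ hmeas hcone hr hτ
end

section
/- Let μ be a Borel probability measure on ℝ with finite r-th moment for some r ≥ 1, and suppose μ is not a Dirac mass. For each n, let e_n = inf over all x_1 ≤ … ≤ x_n of d_r((1/n)Σ_{i=1}^n δ_{x_i}, μ). Then limsup_{n→∞} n·e_n > 0; in fact limsup_{n→∞} n·e_n ≥ ½ ∫_0^{1/2} (F_μ⁻¹(t + 1/2) − F_μ⁻¹(t)) dt. -/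
open Set MeasureTheory Filter
open scoped ENNReal

/-- The distribution function of a measure on `ℝ`. -/
noncomputable def cdf (μ : Measure ℝ) (x : ℝ) : ℝ := (μ (Set.Iic x)).toReal

/-- The (upper) quantile function `F_μ⁻¹(t) = sup {x : F_μ(x) ≤ t}`. -/
noncomputable def quantile (μ : Measure ℝ) (t : ℝ) : ℝ := sSup {x : ℝ | cdf μ x ≤ t}

/-- The discrete measure `(1/n) ∑_{i=1}^n δ_{y_i}`. -/
noncomputable def unifAtoms (n : ℕ) (y : Fin n → ℝ) : Measure ℝ :=
  (n : ℝ≥0∞)⁻¹ • ∑ i, Measure.dirac (y i)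

/-- The `L^r`-Kantorovich distance, expressed via quantile functions. -/
noncomputable def drE (r : ℝ) (μ ν : Measure ℝ) : ℝ≥0∞ :=
  (∫⁻ t in Set.Ioo (0 : ℝ) 1, ENNReal.ofReal |quantile μ t - quantile ν t| ^ r) ^ (1 / r)

/-!
Write `Q = quantile μ`, `h = 1 / (2n)` and `‖x‖` for the distance from `x` to `ℤ` (the norm of
`UnitAddCircle`). For monotone `y` the quantile of `unifAtoms n y` is constant on each block
`[k/n, (k+1)/n)`, so on the union `E` of the first halves of the blocks it takes the same value at
`t` and at `t + h`, and the triangle inequality gives `d_r ≥ d_1 ≥ ∫_E (Q (t + h) - Q t) dt`.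
With `F s = |{t ∈ (0, 1) : Q t ≤ s}|`, Fubini bounds the right-hand side below by
`∫ |E ∩ (F s - h, F s)| ds ≥ n⁻¹ ∫ ‖n F s‖ ds`. Since `‖x‖ ≤ ‖n x‖ + ‖(n + 1) x‖`, the limsup of
`∫ ‖n F s‖ ds` is at least `½ ∫ ‖F s‖ ds`, and Fubini again bounds `∫ ‖F s‖ ds` below by
`∫_0^{1/2} (Q (t + ½) - Q t) dt`. This last integral vanishes only when `Q` is constant on `(0, 1)`,
that is, when `μ` is a Dirac mass.
-/

lemma norm_unitAddCircle_le_abs_sub (x : ℝ) (z : ℤ) : ‖(x : UnitAddCircle)‖ ≤ |x - z| :=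
  UnitAddCircle.norm_eq ▸ round_le x z

lemma norm_unitAddCircle_le_add_succ (x : ℝ) (n : ℕ) :
    ‖(x : UnitAddCircle)‖
      ≤ ‖((n * x : ℝ) : UnitAddCircle)‖ + ‖(((n + 1 : ℕ) * x : ℝ) : UnitAddCircle)‖ := by
  have h : ((x : ℝ) : UnitAddCircle)
      = (((n + 1 : ℕ) * x : ℝ) : UnitAddCircle) - ((n * x : ℝ) : UnitAddCircle) := by
    rw [← AddCircle.coe_sub]; push_cast; ring_nf
  rw [h]
  exact (norm_sub_le _ _).trans_eq (add_comm _ _)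

lemma norm_unitAddCircle_of_le_half {x : ℝ} (h0 : 0 ≤ x) (h : x ≤ 2⁻¹) :
    ‖(x : UnitAddCircle)‖ = x := by
  rw [(AddCircle.norm_coe_eq_abs_iff 1 one_ne_zero).2
    (by rw [abs_of_nonneg h0]; norm_num; linarith), abs_of_nonneg h0]

lemma norm_unitAddCircle_of_half_le {x : ℝ} (h : 2⁻¹ ≤ x) (h1 : x ≤ 1) :
    ‖(x : UnitAddCircle)‖ = 1 - x := by
  have : ((x : ℝ) : UnitAddCircle) = ((x - 1 : ℝ) : UnitAddCircle) := by
    rw [AddCircle.coe_sub, AddCircle.coe_period, sub_zero]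
  rw [this, (AddCircle.norm_coe_eq_abs_iff 1 one_ne_zero).2
    (by rw [abs_of_nonpos (by linarith)]; norm_num; linarith), abs_of_nonpos (by linarith)]
  ring

section Quantile

variable {μ : Measure ℝ} [IsProbabilityMeasure μ]

lemma cdf_eq_cdf (x : ℝ) : cdf μ x = ProbabilityTheory.cdf μ x := by
  rw [cdf, ProbabilityTheory.cdf_eq_real, measureReal_def]

lemma cdf_mono : Monotone (cdf μ) := fun _ _ h => by
  simpa only [cdf_eq_cdf] using (ProbabilityTheory.cdf μ).mono h

lemma nonempty_setOf_cdf_le {t : ℝ} (ht : 0 < t) : {x | cdf μ x ≤ t}.Nonempty := by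
  obtain ⟨x, hx⟩ := ((ProbabilityTheory.tendsto_cdf_atBot (μ := μ)).eventually_lt_const ht).exists
  exact ⟨x, by rw [mem_ofPred_eq, cdf_eq_cdf]; exact hx.le⟩

lemma bddAbove_setOf_cdf_le {t : ℝ} (ht : t < 1) : BddAbove {x | cdf μ x ≤ t} := by
  obtain ⟨b, hb⟩ := ((ProbabilityTheory.tendsto_cdf_atTop (μ := μ)).eventually_const_lt ht).exists
  refine ⟨b, fun x hx => le_of_not_gt fun hbx => ?_⟩
  have := cdf_mono (μ := μ) hbx.le
  rw [cdf_eq_cdf] at this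
  exact (hb.trans_le this).not_ge hx

lemma quantile_monotoneOn : MonotoneOn (quantile μ) (Ioo 0 1) := fun _ ha _ hb hab =>
  csSup_le_csSup (bddAbove_setOf_cdf_le hb.2) (nonempty_setOf_cdf_le ha.1)
    fun _ hx => le_trans hx hab

lemma cdf_le_of_lt_quantile {t x : ℝ} (ht : 0 < t) (hx : x < quantile μ t) : cdf μ x ≤ t := by
  obtain ⟨z, hz, hxz⟩ := exists_lt_of_lt_csSup (nonempty_setOf_cdf_le ht) hx
  exact (cdf_mono hxz.le).trans hz

lemma le_quantile_of_cdf_le {t x : ℝ} (ht : t < 1) (hx : cdf μ x ≤ t) : x ≤ quantile μ t :=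
  le_csSup (bddAbove_setOf_cdf_le ht) hx

lemma aemeasurable_quantile : AEMeasurable (quantile μ) (volume.restrict (Ioo 0 1)) :=
  aemeasurable_restrict_of_monotoneOn measurableSet_Ioo quantile_monotoneOn

end Quantile

section UnifAtoms

open scoped Finset

variable {n : ℕ} {y : Fin n → ℝ}

lemma unifAtoms_Iic (x : ℝ) :
    unifAtoms n y (Iic x) = (n : ℝ≥0∞)⁻¹ * #{i | y i ≤ x} := by
  rw [unifAtoms, Measure.smul_apply, smul_eq_mul, Measure.finsetSum_apply]
  simp_rw [Measure.dirac_apply' _ measurableSet_Iic, indicator_apply, mem_Iic, Pi.one_apply]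
  rw [Finset.sum_boole]

lemma isProbabilityMeasure_unifAtoms (hn : 0 < n) : IsProbabilityMeasure (unifAtoms n y) := by
  constructor
  rw [unifAtoms, Measure.smul_apply, smul_eq_mul, Measure.finsetSum_apply]
  simp [ENNReal.inv_mul_cancel (Nat.cast_ne_zero.2 hn.ne')]

lemma cdf_unifAtoms (x : ℝ) : cdf (unifAtoms n y) x = #{i | y i ≤ x} / n := by
  rw [cdf, unifAtoms_Iic, ENNReal.toReal_mul, ENNReal.toReal_inv]
  simp [div_eq_inv_mul]

lemma card_le_iff_lt_of_monotone (hy : Monotone y) (k : Fin n) (x : ℝ) :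
    #{i | y i ≤ x} ≤ k ↔ x < y k := by
  constructor
  · intro h
    by_contra! hkx
    have : Finset.Iic k ⊆ ({i | y i ≤ x} : Finset (Fin n)) := fun i hi =>
      Finset.mem_filter.2 ⟨Finset.mem_univ _, (hy (Finset.mem_Iic.1 hi)).trans hkx⟩
    have := Finset.card_le_card this
    rw [Fin.card_Iic] at this
    omega
  · intro h
    have : ({i | y i ≤ x} : Finset (Fin n)) ⊆ Finset.Iio k := fun i hi =>
      Finset.mem_Iio.2 (lt_of_not_ge fun hki =>
        ((Finset.mem_filter.1 hi).2.trans_lt h).not_ge (hy hki))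
    simpa using Finset.card_le_card this

lemma quantile_unifAtoms (hy : Monotone y) (k : Fin n) {t : ℝ}
    (hk : k ≤ n * t) (hk' : n * t < k + 1) : quantile (unifAtoms n y) t = y k := by
  have hn : (0 : ℝ) < n := by exact_mod_cast k.pos
  suffices {x | cdf (unifAtoms n y) x ≤ t} = Iio (y k) by rw [quantile, this, csSup_Iio]
  ext x
  rw [mem_ofPred_eq, cdf_unifAtoms, div_le_iff₀ hn, mem_Iio, ← card_le_iff_lt_of_monotone hy]
  constructor
  · intro h
    have : (#{i | y i ≤ x} : ℝ) < k + 1 := by linarith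
    exact_mod_cast Nat.lt_succ_iff.1 (by exact_mod_cast this)
  · intro h
    have : (#{i | y i ≤ x} : ℝ) ≤ k := by exact_mod_cast h
    linarith

end UnifAtoms

section LebesgueCdf

noncomputable def lebesgueCdf (Q : ℝ → ℝ) (s : ℝ) : ℝ :=
  (volume {t ∈ Ioo (0 : ℝ) 1 | Q t ≤ s}).toReal

lemma volume_sublevelSet_ne_top (Q : ℝ → ℝ) (s : ℝ) :
    volume {t ∈ Ioo (0 : ℝ) 1 | Q t ≤ s} ≠ ⊤ :=
  ne_top_of_le_ne_top (by simp) (measure_mono fun _ ht => ht.1)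

lemma lebesgueCdf_monotone (Q : ℝ → ℝ) : Monotone (lebesgueCdf Q) := fun _ b hab =>
  ENNReal.toReal_mono (volume_sublevelSet_ne_top Q b)
    (measure_mono fun _ ht => ⟨ht.1, ht.2.trans hab⟩)

lemma lebesgueCdf_mem_Icc (Q : ℝ → ℝ) (s : ℝ) : lebesgueCdf Q s ∈ Icc (0 : ℝ) 1 := by
  refine ⟨ENNReal.toReal_nonneg, ?_⟩
  have h := ENNReal.toReal_mono (by simp) (measure_mono (μ := volume)
    (fun t (ht : t ∈ {t ∈ Ioo (0 : ℝ) 1 | Q t ≤ s}) => ht.1))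
  simpa [lebesgueCdf, Real.volume_Ioo] using h

variable {Q : ℝ → ℝ} (hQ : MonotoneOn Q (Ioo 0 1))
include hQ

lemma le_lebesgueCdf {a s : ℝ} (ha : a ∈ Ioo (0 : ℝ) 1) (h : Q a ≤ s) :
    a ≤ lebesgueCdf Q s := by
  have hsub : Ioc 0 a ⊆ {t ∈ Ioo (0 : ℝ) 1 | Q t ≤ s} := fun t ht =>
    have ht' : t ∈ Ioo (0 : ℝ) 1 := ⟨ht.1, ht.2.trans_lt ha.2⟩
    ⟨ht', (hQ ht' ha ht.2).trans h⟩
  have := ENNReal.toReal_mono (volume_sublevelSet_ne_top Q s) (measure_mono hsub)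
  rwa [Real.volume_Ioc, sub_zero, ENNReal.toReal_ofReal ha.1.le] at this

lemma lebesgueCdf_le {a s : ℝ} (ha : a ∈ Ioo (0 : ℝ) 1) (h : s < Q a) :
    lebesgueCdf Q s ≤ a := by
  have hsub : {t ∈ Ioo (0 : ℝ) 1 | Q t ≤ s} ⊆ Ioo 0 a := fun t ht =>
    ⟨ht.1.1, lt_of_not_ge fun hat => (ht.2.trans_lt h).not_ge (hQ ha ht.1 hat)⟩
  have := ENNReal.toReal_mono measure_Ioo_lt_top.ne (measure_mono (μ := volume) hsub)
  rwa [Real.volume_Ioo, sub_zero, ENNReal.toReal_ofReal ha.1.le] at this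

lemma volume_lebesgueCdf_sub_mem_Ioo_le {t h : ℝ} (ht : t ∈ Ioo (0 : ℝ) 1)
    (hth : t + h ∈ Ioo (0 : ℝ) 1) :
    volume {s | lebesgueCdf Q s - t ∈ Ioo 0 h} ≤ ENNReal.ofReal (Q (t + h) - Q t) := by
  rw [← Real.volume_Ico]
  refine measure_mono fun s hs => ⟨?_, ?_⟩
  · exact le_of_not_gt fun hlt => (lebesgueCdf_le hQ ht hlt).not_gt (by linarith [hs.1])
  · exact lt_of_not_ge fun hle => (le_lebesgueCdf hQ hth hle).not_gt (by linarith [hs.2])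

lemma ofReal_le_volume_lebesgueCdf_sub_mem_Icc {t h : ℝ} (ht : t ∈ Ioo (0 : ℝ) 1)
    (hth : t + h ∈ Ioo (0 : ℝ) 1) :
    ENNReal.ofReal (Q (t + h) - Q t) ≤ volume {s | lebesgueCdf Q s - t ∈ Icc 0 h} := by
  rw [← Real.volume_Ico]
  refine measure_mono fun s hs => ⟨?_, ?_⟩
  · linarith [le_lebesgueCdf hQ ht hs.1]
  · linarith [lebesgueCdf_le hQ hth hs.2]

end LebesgueCdf

lemma setLIntegral_volume_sub_mem_comm {E : Set ℝ} {f : ℝ → ℝ} (hf : Measurable f)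
    {W : Set ℝ} (hW : MeasurableSet W) :
    ∫⁻ t in E, volume {s | f s - t ∈ W} = ∫⁻ s, volume (E ∩ (f s - ·) ⁻¹' W) := by
  have hS : MeasurableSet {p : ℝ × ℝ | f p.2 - p.1 ∈ W} :=
    ((hf.comp measurable_snd).sub measurable_fst) hW
  calc ∫⁻ t in E, volume {s | f s - t ∈ W}
      = ((volume.restrict E).prod volume) {p : ℝ × ℝ | f p.2 - p.1 ∈ W} :=
        (Measure.prod_apply hS).symm
    _ = ∫⁻ s, volume (E ∩ (f s - ·) ⁻¹' W) := by
        rw [Measure.prod_apply_symm hS]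
        refine lintegral_congr fun s => ?_
        rw [Measure.restrict_apply (measurable_prodMk_right hS), inter_comm]
        rfl

lemma setLIntegral_add_comp_add_le {E U : Set ℝ} (hE : MeasurableSet E) {h : ℝ}
    (hshift : ∀ t ∈ E, t + h ∉ E) (hEU : E ⊆ U) (hshiftU : ∀ t ∈ E, t + h ∈ U)
    {D : ℝ → ℝ≥0∞} (hD : AEMeasurable D (volume.restrict E)) :
    ∫⁻ t in E, (D t + D (t + h)) ≤ ∫⁻ t in U, D t := by
  set S := (· - h) ⁻¹' E
  have hS : MeasurableSet S := (measurable_sub_const h) hE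
  have hshifted : ∫⁻ t in E, D (t + h) = ∫⁻ t in S, D t := by
    rw [← lintegral_indicator hE, ← lintegral_indicator hS,
      ← lintegral_add_right_eq_self (S.indicator D) h]
    congr 1
    ext t
    by_cases ht : t ∈ E <;> simp [S, ht]
  have hdisj : Disjoint E S := by
    refine disjoint_left.2 fun t ht htS => hshift (t - h) htS ?_
    simpa using ht
  have hSU : S ⊆ U := fun t ht => by simpa using hshiftU (t - h) ht
  rw [lintegral_add_left' hD, hshifted, ← lintegral_union hS hdisj]
  exact lintegral_mono_set (union_subset hEU hSU)

lemma lintegral_le_lintegral_rpow_one_div {α : Type*} [MeasurableSpace α] {ν : Measure α}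
    [IsProbabilityMeasure ν] {f : α → ℝ≥0∞} (hf : AEMeasurable f ν) {r : ℝ} (hr : 1 ≤ r) :
    ∫⁻ a, f a ∂ν ≤ (∫⁻ a, f a ^ r ∂ν) ^ (1 / r) := by
  have hr0 : ENNReal.ofReal r ≠ 0 := (ENNReal.ofReal_pos.2 (by linarith)).ne'
  have h := eLpNorm_le_eLpNorm_of_exponent_le (ENNReal.one_le_ofReal.2 hr) hf.aestronglyMeasurable
  rwa [eLpNorm_one_eq_lintegral_enorm, eLpNorm_eq_lintegral_rpow_enorm_toReal hr0
    ENNReal.ofReal_ne_top, ENNReal.toReal_ofReal (by linarith)] at h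

lemma lintegral_abs_quantile_sub_le_drE {r : ℝ} (hr : 1 ≤ r) (ν μ : Measure ℝ)
    [IsProbabilityMeasure ν] [IsProbabilityMeasure μ] :
    ∫⁻ t in Ioo 0 1, ENNReal.ofReal |quantile ν t - quantile μ t| ≤ drE r ν μ := by
  have : IsProbabilityMeasure (volume.restrict (Ioo (0 : ℝ) 1)) := ⟨by simp⟩
  exact lintegral_le_lintegral_rpow_one_div
    (aemeasurable_quantile.sub aemeasurable_quantile).abs.ennreal_ofReal hr

lemma inv_two_mul_le_limsup_of_le_add_succ {g : ℕ → ℝ≥0∞} {c : ℝ≥0∞}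
    (h : ∀ i, c ≤ g i + g (i + 1)) :
    2⁻¹ * c ≤ atTop.limsup g := by
  by_contra! hlt
  obtain ⟨N, hN⟩ := (eventually_atTop.1 (eventually_lt_of_limsup_lt hlt))
  have := (h N).trans_lt (ENNReal.add_lt_add (hN N le_rfl) (hN (N + 1) N.le_succ))
  rw [← add_mul, ENNReal.inv_two_add_inv_two, one_mul] at this
  exact this.false

lemma lintegral_norm_le_add_succ {α : Type*} [MeasurableSpace α] {ν : Measure α} {f : α → ℝ}
    (hf : Measurable f) (i : ℕ) :
    ∫⁻ a, ENNReal.ofReal ‖(f a : UnitAddCircle)‖ ∂ν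
      ≤ ∫⁻ a, ENNReal.ofReal ‖((i * f a : ℝ) : UnitAddCircle)‖ ∂ν
        + ∫⁻ a, ENNReal.ofReal ‖(((i + 1 : ℕ) * f a : ℝ) : UnitAddCircle)‖ ∂ν := by
  have hmeas : Measurable fun x : ℝ => ENNReal.ofReal ‖(x : UnitAddCircle)‖ :=
    (by fun_prop : Continuous fun x : ℝ => ‖(x : UnitAddCircle)‖).measurable.ennreal_ofReal
  have hi : AEMeasurable (fun a => ENNReal.ofReal ‖((i * f a : ℝ) : UnitAddCircle)‖) ν :=
    (hmeas.comp (hf.const_mul _)).aemeasurable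
  rw [← lintegral_add_left' hi]
  exact lintegral_mono fun a =>
    (ENNReal.ofReal_le_ofReal (norm_unitAddCircle_le_add_succ _ i)).trans ENNReal.ofReal_add_le

def firstHalves (n : ℕ) : Set ℝ := ⋃ k ∈ Finset.range n, Ioo ((k : ℝ) / n) ((k + 2⁻¹) / n)

section FirstHalves

variable {n : ℕ}

lemma measurableSet_firstHalves : MeasurableSet (firstHalves n) :=
  Finset.measurableSet_biUnion _ fun _ _ => measurableSet_Ioo

lemma mem_firstHalves (hn : 0 < n) {t : ℝ} :
    t ∈ firstHalves n ↔ ∃ k < n, (k : ℝ) < n * t ∧ n * t < k + 2⁻¹ := by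
  have hn' : (0 : ℝ) < n := by exact_mod_cast hn
  simp only [firstHalves, mem_iUnion, Finset.mem_range, mem_Ioo, exists_prop,
    div_lt_iff₀ hn', lt_div_iff₀ hn', mul_comm t]

lemma mul_add_inv_two_mul (hn : 0 < n) (t : ℝ) :
    (n : ℝ) * (t + (2 * (n : ℝ))⁻¹) = n * t + 2⁻¹ := by
  have : (n : ℝ) ≠ 0 := by exact_mod_cast hn.ne'
  field_simp

lemma mem_Ioo_of_mem_firstHalves (hn : 0 < n) {t : ℝ} (ht : t ∈ firstHalves n) :
    t ∈ Ioo (0 : ℝ) 1 ∧ t + (2 * (n : ℝ))⁻¹ ∈ Ioo (0 : ℝ) 1 := by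
  obtain ⟨k, hk, h1, h2⟩ := (mem_firstHalves hn).1 ht
  have hn' : (0 : ℝ) < n := by exact_mod_cast hn
  have hkn : (k : ℝ) + 1 ≤ n := by exact_mod_cast hk
  have := mul_add_inv_two_mul hn t
  refine ⟨⟨?_, ?_⟩, ?_, ?_⟩ <;> nlinarith [k.cast_nonneg (α := ℝ)]

lemma add_inv_two_mul_notMem_firstHalves (hn : 0 < n) {t : ℝ} (ht : t ∈ firstHalves n) :
    t + (2 * (n : ℝ))⁻¹ ∉ firstHalves n := by
  rw [mem_firstHalves hn, mul_add_inv_two_mul hn]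
  rintro ⟨j, -, hj1, hj2⟩
  obtain ⟨k, -, hk1, hk2⟩ := (mem_firstHalves hn).1 ht
  have hkj : k < j := by exact_mod_cast (show (k : ℝ) < j by linarith)
  have : (k : ℝ) + 1 ≤ j := by exact_mod_cast hkj
  linarith

lemma quantile_unifAtoms_add_inv_two_mul (hn : 0 < n) {y : Fin n → ℝ} (hy : Monotone y)
    {t : ℝ} (ht : t ∈ firstHalves n) :
    quantile (unifAtoms n y) (t + (2 * (n : ℝ))⁻¹) = quantile (unifAtoms n y) t := by
  obtain ⟨k, hk, h1, h2⟩ := (mem_firstHalves hn).1 ht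
  have := mul_add_inv_two_mul hn t
  rw [quantile_unifAtoms hy ⟨k, hk⟩ (by rw [Fin.val_mk]; linarith) (by rw [Fin.val_mk]; linarith),
    quantile_unifAtoms hy ⟨k, hk⟩ (by rw [Fin.val_mk]; linarith) (by rw [Fin.val_mk]; linarith)]

lemma ofReal_norm_le_mul_volume_firstHalves (hn : 0 < n) {x : ℝ} (hx : x ∈ Icc (0 : ℝ) 1) :
    ENNReal.ofReal ‖((n * x : ℝ) : UnitAddCircle)‖
      ≤ n * volume (firstHalves n ∩ Ioo (x - (2 * (n : ℝ))⁻¹) x) := by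
  have hn' : (0 : ℝ) < n := by exact_mod_cast hn
  have hnh : (n : ℝ) * (2 * (n : ℝ))⁻¹ = 2⁻¹ := by field_simp
  suffices ∃ a b, Ioo a b ⊆ firstHalves n ∩ Ioo (x - (2 * (n : ℝ))⁻¹) x ∧
      ‖((n * x : ℝ) : UnitAddCircle)‖ ≤ n * (b - a) by
    obtain ⟨a, b, hab, hle⟩ := this
    calc ENNReal.ofReal ‖((n * x : ℝ) : UnitAddCircle)‖ ≤ ENNReal.ofReal (n * (b - a)) :=
          ENNReal.ofReal_le_ofReal hle
      _ = n * volume (Ioo a b) := by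
          rw [Real.volume_Ioo, ENNReal.ofReal_mul hn'.le, ENNReal.ofReal_natCast]
      _ ≤ _ := by gcongr
  set k := ⌊(n : ℝ) * x⌋₊
  have hk : (k : ℝ) ≤ n * x := Nat.floor_le (by nlinarith [hx.1])
  have hk1 : (n : ℝ) * x < k + 1 := Nat.lt_floor_add_one _
  have hbelow := norm_unitAddCircle_le_abs_sub (n * x) k
  have habove := norm_unitAddCircle_le_abs_sub (n * x) (k + 1)
  push_cast at hbelow habove
  rcases hk.eq_or_lt with heq | hlt
  · refine ⟨x, x, by simp, ?_⟩
    rw [heq, sub_self, abs_zero] at hbelow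
    rwa [sub_self, mul_zero]
  have hkn : k < n := by exact_mod_cast (show (k : ℝ) < n by nlinarith [hx.2])
  rcases le_or_gt ((n : ℝ) * x) (k + 2⁻¹) with hc | hc
  · refine ⟨k / n, x, fun z hz => ?_, ?_⟩
    · have hz1 := (div_lt_iff₀ hn').1 hz.1
      have hz2 := mul_lt_mul_of_pos_left hz.2 hn'
      refine ⟨(mem_firstHalves hn).2 ⟨k, hkn, by linarith, by linarith⟩, ?_, hz.2⟩
      nlinarith
    · rw [abs_of_nonneg (by linarith)] at hbelow
      rw [mul_sub, mul_div_cancel₀ _ hn'.ne']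
      exact hbelow
  · refine ⟨x - (2 * (n : ℝ))⁻¹, (k + 2⁻¹) / n, fun z hz => ?_, ?_⟩
    · have hz1 := mul_lt_mul_of_pos_left hz.1 hn'
      have hz2 := (lt_div_iff₀ hn').1 hz.2
      rw [mul_sub, hnh] at hz1
      refine ⟨(mem_firstHalves hn).2 ⟨k, hkn, by linarith, by linarith⟩, hz.1, ?_⟩
      nlinarith
    · rw [abs_of_neg (by linarith)] at habove
      rw [mul_sub, mul_div_cancel₀ _ hn'.ne', mul_sub, hnh]
      linarith

end FirstHalves

section LowerBound

variable {μ : Measure ℝ} [IsProbabilityMeasure μ] {n : ℕ}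

lemma setLIntegral_firstHalves_quantile_sub_le (hn : 0 < n) {y : Fin n → ℝ}
    (hy : Monotone y) :
    ∫⁻ t in firstHalves n, ENNReal.ofReal (quantile μ (t + (2 * (n : ℝ))⁻¹) - quantile μ t)
      ≤ ∫⁻ t in Ioo 0 1, ENNReal.ofReal |quantile (unifAtoms n y) t - quantile μ t| := by
  have := isProbabilityMeasure_unifAtoms (y := y) hn
  have hD : AEMeasurable (fun t => ENNReal.ofReal |quantile (unifAtoms n y) t - quantile μ t|)
      (volume.restrict (firstHalves n)) :=
    (aemeasurable_quantile.sub aemeasurable_quantile).abs.ennreal_ofReal.mono_measure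
      (Measure.restrict_mono (fun t ht => (mem_Ioo_of_mem_firstHalves hn ht).1) le_rfl)
  refine (setLIntegral_mono' measurableSet_firstHalves fun t ht => ?_).trans
    (setLIntegral_add_comp_add_le measurableSet_firstHalves
      (fun t ht => add_inv_two_mul_notMem_firstHalves hn ht)
      (fun t ht => (mem_Ioo_of_mem_firstHalves hn ht).1)
      (fun t ht => (mem_Ioo_of_mem_firstHalves hn ht).2) hD)
  rw [quantile_unifAtoms_add_inv_two_mul hn hy ht]
  refine (ENNReal.ofReal_le_ofReal ?_).trans ENNReal.ofReal_add_le
  linarith [le_abs_self (quantile (unifAtoms n y) t - quantile μ t),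
    neg_abs_le (quantile (unifAtoms n y) t - quantile μ (t + (2 * (n : ℝ))⁻¹))]

lemma lintegral_norm_mul_lebesgueCdf_le (hn : 0 < n) {y : Fin n → ℝ} (hy : Monotone y) :
    ∫⁻ s, ENNReal.ofReal ‖((n * lebesgueCdf (quantile μ) s : ℝ) : UnitAddCircle)‖
      ≤ n * ∫⁻ t in Ioo 0 1, ENNReal.ofReal |quantile (unifAtoms n y) t - quantile μ t| := by
  set F := lebesgueCdf (quantile μ)
  set h := (2 * (n : ℝ))⁻¹
  calc ∫⁻ s, ENNReal.ofReal ‖((n * F s : ℝ) : UnitAddCircle)‖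
      ≤ ∫⁻ s, n * volume (firstHalves n ∩ (F s - ·) ⁻¹' Ioo 0 h) := lintegral_mono fun s => by
        rw [preimage_const_sub_Ioo, sub_zero]
        exact ofReal_norm_le_mul_volume_firstHalves hn (lebesgueCdf_mem_Icc _ s)
    _ = n * ∫⁻ t in firstHalves n, volume {s | F s - t ∈ Ioo 0 h} := by
        rw [lintegral_const_mul' _ _ (ENNReal.natCast_ne_top n),
          setLIntegral_volume_sub_mem_comm (lebesgueCdf_monotone _).measurable measurableSet_Ioo]
    _ ≤ n * ∫⁻ t in firstHalves n, ENNReal.ofReal (quantile μ (t + h) - quantile μ t) :=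
        mul_le_mul_right (setLIntegral_mono' measurableSet_firstHalves fun t ht =>
          volume_lebesgueCdf_sub_mem_Ioo_le quantile_monotoneOn
            (mem_Ioo_of_mem_firstHalves hn ht).1 (mem_Ioo_of_mem_firstHalves hn ht).2) _
    _ ≤ _ := mul_le_mul_right (setLIntegral_firstHalves_quantile_sub_le hn hy) _

lemma lintegral_norm_mul_lebesgueCdf_le_mul_iInf_drE {r : ℝ} (hr : 1 ≤ r) (n : ℕ) :
    ∫⁻ s, ENNReal.ofReal ‖((n * lebesgueCdf (quantile μ) s : ℝ) : UnitAddCircle)‖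
      ≤ n * ⨅ y : {y : Fin n → ℝ // Monotone y}, drE r (unifAtoms n y.1) μ := by
  rcases n.eq_zero_or_pos with rfl | hn
  · simp
  rw [ENNReal.mul_iInf_of_ne (Nat.cast_ne_zero.2 hn.ne') (ENNReal.natCast_ne_top n)]
  refine le_iInf fun y => (lintegral_norm_mul_lebesgueCdf_le hn y.2).trans ?_
  have := isProbabilityMeasure_unifAtoms (y := y.1) hn
  gcongr
  exact lintegral_abs_quantile_sub_le_drE hr _ _

end LowerBound

lemma volume_Ioo_inter_preimage_sub_Icc_le_norm {x : ℝ} (hx : x ∈ Icc (0 : ℝ) 1) :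
    volume (Ioo 0 (1 / 2) ∩ (x - ·) ⁻¹' Icc 0 (1 / 2)) ≤ ENNReal.ofReal ‖(x : UnitAddCircle)‖ := by
  rw [preimage_const_sub_Icc, sub_zero]
  rcases le_total x 2⁻¹ with h | h
  · calc _ ≤ volume (Icc 0 x) := measure_mono fun t ht => ⟨ht.1.1.le, ht.2.2⟩
      _ = _ := by rw [Real.volume_Icc, sub_zero, norm_unitAddCircle_of_le_half hx.1 h]
  · calc _ ≤ volume (Icc (x - 1 / 2) (1 / 2)) :=
          measure_mono fun t ht => ⟨ht.2.1, ht.1.2.le⟩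
      _ = _ := by rw [Real.volume_Icc, norm_unitAddCircle_of_half_le h hx.2]; ring_nf

lemma lintegral_add_half_sub_le_lintegral_norm {Q : ℝ → ℝ} (hQ : MonotoneOn Q (Ioo 0 1)) :
    ∫⁻ t in Ioo 0 (1 / 2), ENNReal.ofReal (Q (t + 1 / 2) - Q t)
      ≤ ∫⁻ s, ENNReal.ofReal ‖(lebesgueCdf Q s : UnitAddCircle)‖ :=
  calc ∫⁻ t in Ioo 0 (1 / 2), ENNReal.ofReal (Q (t + 1 / 2) - Q t)
      ≤ ∫⁻ t in Ioo 0 (1 / 2), volume {s | lebesgueCdf Q s - t ∈ Icc 0 (1 / 2)} :=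
        setLIntegral_mono' measurableSet_Ioo fun t ht =>
          ofReal_le_volume_lebesgueCdf_sub_mem_Icc hQ ⟨ht.1, by linarith [ht.2]⟩
            ⟨by linarith [ht.1], by linarith [ht.2]⟩
    _ = ∫⁻ s, volume (Ioo 0 (1 / 2) ∩ (lebesgueCdf Q s - ·) ⁻¹' Icc 0 (1 / 2)) :=
        setLIntegral_volume_sub_mem_comm (lebesgueCdf_monotone Q).measurable measurableSet_Icc
    _ ≤ _ := lintegral_mono fun s =>
        volume_Ioo_inter_preimage_sub_Icc_le_norm (lebesgueCdf_mem_Icc Q s)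

lemma lintegral_add_half_sub_pos {Q : ℝ → ℝ} (hQ : MonotoneOn Q (Ioo 0 1)) {u v : ℝ}
    (hu : u ∈ Ioo (0 : ℝ) 1) (hv : v ∈ Ioo (0 : ℝ) 1) (huv : u < v) (hlt : Q u < Q v) :
    0 < ∫⁻ t in Ioo 0 (1 / 2), ENNReal.ofReal (Q (t + 1 / 2) - Q t) := by
  wlog hclose : v < u + 1 / 2 generalizing u v
  · have hw : (u + v) / 2 ∈ Ioo (0 : ℝ) 1 := ⟨by linarith [hu.1], by linarith [hv.2]⟩
    rcases lt_or_ge (Q u) (Q ((u + v) / 2)) with h | h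
    · exact this hu hw (by linarith) h (by linarith [hv.2, hu.1])
    · exact this hw hv (by linarith) (h.trans_lt hlt) (by linarith [hv.2, hu.1])
  -- for `t` in this interval, `[u, v] ⊆ [t, t + 1/2]`
  set J := Ioo (max 0 (v - 1 / 2)) (min u (1 / 2))
  have hJ : J ⊆ Ioo 0 (1 / 2) := fun t ht =>
    ⟨(le_max_left _ _).trans_lt ht.1, ht.2.trans_le (min_le_right _ _)⟩
  calc (0 : ℝ≥0∞) < ENNReal.ofReal (Q v - Q u) * volume J := by
        refine ENNReal.mul_pos (by simpa using hlt) ?_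
        rw [Real.volume_Ioo, ne_eq, ENNReal.ofReal_eq_zero, not_le, sub_pos]
        exact max_lt (lt_min hu.1 (by norm_num)) (lt_min (by linarith) (by linarith [hv.2]))
    _ = ∫⁻ _ in J, ENNReal.ofReal (Q v - Q u) := (setLIntegral_const _ _).symm
    _ ≤ ∫⁻ t in J, ENNReal.ofReal (Q (t + 1 / 2) - Q t) :=
        setLIntegral_mono' measurableSet_Ioo fun t ht => by
          have ht1 : t ∈ Ioo (0 : ℝ) 1 := ⟨(hJ ht).1, by linarith [(hJ ht).2]⟩
          have ht2 : t + 1 / 2 ∈ Ioo (0 : ℝ) 1 := ⟨by linarith [ht1.1], by linarith [(hJ ht).2]⟩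
          have htu : t ≤ u := ht.2.le.trans (min_le_left _ _)
          have hvt : v ≤ t + 1 / 2 := by linarith [(le_max_right 0 (v - 1 / 2)).trans_lt ht.1]
          exact ENNReal.ofReal_le_ofReal (by linarith [hQ ht1 hu htu, hQ hv ht2 hvt])
    _ ≤ _ := lintegral_mono_set hJ

section Dirac

variable {μ : Measure ℝ} [IsProbabilityMeasure μ]

lemma eq_dirac_of_quantile_eq {c : ℝ} (h : ∀ t ∈ Ioo (0 : ℝ) 1, quantile μ t = c) :
    μ = Measure.dirac c := by
  set G := ProbabilityTheory.cdf μ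
  have hlow : ∀ x < c, G x = 0 := fun x hx => le_antisymm
    (le_of_forall_gt_imp_ge_of_dense fun t ht => by
      rcases lt_or_ge t 1 with ht1 | ht1
      · rw [← cdf_eq_cdf]
        exact cdf_le_of_lt_quantile ht ((h t ⟨ht, ht1⟩).symm ▸ hx)
      · exact (ProbabilityTheory.cdf_le_one μ x).trans ht1) (ProbabilityTheory.cdf_nonneg μ x)
  have hhigh : ∀ x > c, G x = 1 := fun x hx => le_antisymm (ProbabilityTheory.cdf_le_one μ x)
    (le_of_forall_lt_imp_le_of_dense fun t ht => by
      rcases le_or_gt t 0 with ht0 | ht0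
      · exact ht0.trans (ProbabilityTheory.cdf_nonneg μ x)
      · rw [← cdf_eq_cdf]
        by_contra! hxt
        exact hx.not_ge ((le_quantile_of_cdf_le ht hxt.le).trans (h t ⟨ht0, ht⟩).le))
  have hc : G c = 1 := tendsto_nhds_unique ((G.right_continuous c).mono Ioi_subset_Ici_self)
    (tendsto_const_nhds.congr' (eventually_nhdsWithin_of_forall fun x hx => (hhigh x hx).symm))
  refine Measure.ext_of_Iic μ (Measure.dirac c) fun a => ?_
  rw [← ProbabilityTheory.ofReal_cdf, Measure.dirac_apply' _ measurableSet_Iic]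
  rcases lt_or_ge a c with hac | hca
  · rw [hlow a hac, indicator_of_notMem (show c ∉ Iic a from not_le.2 hac)]
    simp
  · rw [indicator_of_mem (mem_Iic.2 hca), hca.eq_or_lt.elim (fun h => h ▸ hc) (hhigh a)]
    simp

lemma exists_quantile_lt_of_ne_dirac (hμ : ∀ c, μ ≠ Measure.dirac c) :
    ∃ u ∈ Ioo (0 : ℝ) 1, ∃ v ∈ Ioo (0 : ℝ) 1, u < v ∧ quantile μ u < quantile μ v := by
  by_contra! h
  have hhalf : (2⁻¹ : ℝ) ∈ Ioo 0 1 := ⟨by norm_num, by norm_num⟩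
  refine hμ (quantile μ 2⁻¹) (eq_dirac_of_quantile_eq fun t ht => ?_)
  rcases lt_trichotomy t 2⁻¹ with ht' | rfl | ht'
  · exact le_antisymm (quantile_monotoneOn ht hhalf ht'.le) (h t ht _ hhalf ht')
  · rfl
  · exact le_antisymm (h _ hhalf t ht ht') (quantile_monotoneOn hhalf ht ht'.le)

end Dirac

theorem stmt18_general (r : ℝ) (hr : 1 ≤ r) (μ : Measure ℝ) [IsProbabilityMeasure μ]
    (hnd : ∀ c : ℝ, μ ≠ Measure.dirac c) :
    2⁻¹ * ∫⁻ t in Set.Ioo (0 : ℝ) (1 / 2),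
          ENNReal.ofReal (quantile μ (t + 1 / 2) - quantile μ t)
        ≤ Filter.atTop.limsup (fun n : ℕ =>
            (n : ℝ≥0∞) * ⨅ y : {y : Fin n → ℝ // Monotone y}, drE r (unifAtoms n y.1) μ) ∧
      0 < Filter.atTop.limsup (fun n : ℕ =>
            (n : ℝ≥0∞) * ⨅ y : {y : Fin n → ℝ // Monotone y}, drE r (unifAtoms n y.1) μ) := by
  refine ⟨?bound, lt_of_lt_of_le ?_ ?bound⟩
  case bound =>
    set F := lebesgueCdf (quantile μ)
    calc _ ≤ 2⁻¹ * ∫⁻ s, ENNReal.ofReal ‖(F s : UnitAddCircle)‖ :=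
          mul_le_mul_right (lintegral_add_half_sub_le_lintegral_norm quantile_monotoneOn) _
      _ ≤ atTop.limsup fun n : ℕ => ∫⁻ s, ENNReal.ofReal ‖((n * F s : ℝ) : UnitAddCircle)‖ :=
          inv_two_mul_le_limsup_of_le_add_succ
            (lintegral_norm_le_add_succ (lebesgueCdf_monotone _).measurable)
      _ ≤ _ := limsup_le_limsup (Eventually.of_forall
          (lintegral_norm_mul_lebesgueCdf_le_mul_iInf_drE hr))
  obtain ⟨u, hu, v, hv, huv, hlt⟩ := exists_quantile_lt_of_ne_dirac hnd
  exact ENNReal.mul_pos (by norm_num)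
    (lintegral_add_half_sub_pos quantile_monotoneOn hu hv huv hlt).ne'

theorem stmt18 (r : ℝ) (hr : 1 ≤ r) (μ : Measure ℝ) [IsProbabilityMeasure μ]
    (hmom : ∫⁻ x : ℝ, ENNReal.ofReal (|x| ^ r) ∂μ ≠ ⊤)
    (hnd : ∀ c : ℝ, μ ≠ Measure.dirac c) :
    2⁻¹ * ∫⁻ t in Set.Ioo (0 : ℝ) (1 / 2),
          ENNReal.ofReal (quantile μ (t + 1 / 2) - quantile μ t)
        ≤ Filter.atTop.limsup (fun n : ℕ =>
            (n : ℝ≥0∞) * ⨅ y : {y : Fin n → ℝ // Monotone y}, drE r (unifAtoms n y.1) μ) ∧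
      0 < Filter.atTop.limsup (fun n : ℕ =>
            (n : ℝ≥0∞) * ⨅ y : {y : Fin n → ℝ // Monotone y}, drE r (unifAtoms n y.1) μ) :=
  stmt18_general r hr μ hnd
end
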